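/- Let D = (V,A) be a digraph. Then χ^<_D(−1) = (−1)^{|V|} if D is acyclic and χ^<_D(−1) = 0 otherwise; and χ^≥_D(−1) = (−1)^{comp(D)} if D is totally cyclic and χ^≥_D(−1) = 0 otherwise. Here χ^<_D and χ^≥_D are the strict- and weak-chromatic polynomials of D, evaluated at −1. -/

import Mathlib

/-!
Grouping the colourings `V → Fin q` by their image gives `∑ₖ sₖ · q.choose k`, where `sₖ` counts
the colourings onto `Fin k`; since `(-1).choose k = (-1) ^ k`, the polynomial takes the value
`∑ₖ (-1) ^ k sₖ` at `-1`. Removing the class `B` of the least colour turns a colouring onto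
`Fin (k + 1)` into one of `D - B` onto `Fin k`, so the value for `D` is minus the sum of the values
for the `D - B`. For an acyclic digraph, induction on `|V|` then evaluates these alternating sums
over sets `B`: in the strict case `B` ranges over the nonempty sets of sources, in the weak case
only the `B` containing every tail of an arc contribute, and they cancel because a sink is no
tail. Weak colourings are constant on strong components, which reduces the weak case to the
acyclic condensation; if every arc lies on a cycle, the strong components are the connected
components and there are `q ^ comp(D)` weak colourings. A directed cycle admits no strict
colouring.
-/
/-- A digraph (arcs `A`, source map `s`, target map `t`) contains a directed cycle. -/
def HasDicycle {V A : Type} (s t : A → V) : Prop :=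
  ∃ n : ℕ, 0 < n ∧ ∃ c : ZMod n → A, ∀ i, t (c i) = s (c (i + 1))

/-- The arc `a` lies on some directed cycle of the digraph. -/
def IsCyclicArc {V A : Type} (s t : A → V) (a : A) : Prop :=
  ∃ n : ℕ, 0 < n ∧ ∃ c : ZMod n → A,
    (∀ i, t (c i) = s (c (i + 1))) ∧ ∃ i, c i = a

/-- The setoid on vertices whose classes are the connected components of the graph
underlying the digraph (arc directions forgotten). -/
def connSetoid {V A : Type} (s t : A → V) : Setoid V where
  r := Relation.ReflTransGen (fun x y => ∃ a, (s a = x ∧ t a = y) ∨ (s a = y ∧ t a = x))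
  iseqv := by
    refine ⟨fun _ => Relation.ReflTransGen.refl, ?_, fun h h' => h.trans h'⟩
    intro x y h
    induction h with
    | refl => exact Relation.ReflTransGen.refl
    | tail _ hbc ih => exact Relation.ReflTransGen.head (hbc.imp (fun a ha => ha.symm)) ih

open Finset Function Polynomial

open scoped Classical Nat

section Generalities

lemma Nat.card_subtype_eq_sum_card_fiber {α β : Type*} [Finite α] [Fintype β] (P : α → Prop)
    (g : α → β) : Nat.card {x // P x} = ∑ b, Nat.card {x // P x ∧ g x = b} := by
  rw [← Nat.card_sigma, ← Nat.card_congr (Equiv.sigmaFiberEquiv fun x : {x // P x} => g x)]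
  exact Nat.card_congr (.sigmaCongrRight fun b =>
    Equiv.subtypeSubtypeEquivSubtypeInter (fun x => P x) (fun x => g x = b))

lemma ZMod.reflTransGen_of_succ {α : Type*} {n : ℕ} [NeZero n] {r : α → α → Prop}
    {v : ZMod n → α} (h : ∀ i, r (v i) (v (i + 1))) (i j : ZMod n) :
    Relation.ReflTransGen r (v i) (v j) := by
  have forward (m : ℕ) : Relation.ReflTransGen r (v i) (v (i + m)) := by
    induction m with
    | zero => simpa using .refl
    | succ m ih => exact ih.tail (by simpa [add_assoc] using h (i + m))
  simpa using forward (j - i).val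

lemma Polynomial.eq_of_eval_natCast_eq {R : Type*} [CommRing R] [IsDomain R] [CharZero R]
    {p q : R[X]} (h : ∀ n : ℕ, 0 < n → p.eval (n : R) = q.eval (n : R)) : p = q :=
  eq_of_infinite_eval_eq p q <| Set.infinite_of_injective_forall_mem
    (f := fun m : ℕ => ((m + 1 : ℕ) : R)) (Nat.cast_injective.comp (add_left_injective 1))
    fun m => h (m + 1) m.succ_pos

lemma descPochhammer_eval_neg_one {R : Type*} [CommRing R] (k : ℕ) :
    (descPochhammer R k).eval (-1) = (-1) ^ k * k ! := by
  induction k with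
  | zero => simp
  | succ k ih =>
    rw [descPochhammer_succ_eval, ih, Nat.factorial_succ]
    push_cast
    ring

lemma Finite.exists_forall_not_rel_of_acyclic {α : Type*} [Finite α] [Nonempty α]
    {R : α → α → Prop} (h : ∀ x, ¬ Relation.TransGen R x x) : ∃ x, ∀ y, ¬ R y x := by
  have : IsTrans α (Relation.TransGen R) := ⟨fun _ _ _ => .trans⟩
  have : Std.Irrefl (Relation.TransGen R) := ⟨h⟩
  obtain ⟨x, -, hx⟩ := (Finite.wellFounded_of_trans_of_irrefl (Relation.TransGen R)).has_min
    Set.univ Set.univ_nonempty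
  exact ⟨x, fun y hyx => hx y trivial (.single hyx)⟩

variable {α : Type*} [Fintype α]

lemma sum_nonempty_subset_neg_one_pow_card {S : Finset α} (hS : S.Nonempty) :
    ∑ B with B.Nonempty ∧ B ⊆ S, (-1 : ℤ) ^ #B = -1 := by
  have hset : ({B | B.Nonempty ∧ B ⊆ S} : Finset (Finset α)) = S.powerset.erase ∅ := by
    ext B; simp [nonempty_iff_ne_empty]
  rw [hset, sum_erase_eq_sub (empty_mem_powerset S), sum_powerset_neg_one_pow_card_of_nonempty hS]
  simp

lemma sum_superset_neg_one_pow_card_compl {K : Finset α} (hK : Kᶜ.Nonempty) :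
    ∑ B with K ⊆ B, (-1 : ℤ) ^ #Bᶜ = 0 := by
  rw [← sum_powerset_neg_one_pow_card_of_nonempty hK]
  exact sum_nbij' compl compl (by simp) (by simp [subset_compl_comm]) (by simp) (by simp)
    (by simp)

lemma neg_one_pow_card_compl (B : Finset α) :
    (-1 : ℤ) ^ #Bᶜ = (-1) ^ Fintype.card α * (-1) ^ #B := by
  rw [← card_compl_add_card B, pow_add, mul_assoc, ← pow_add, Even.neg_one_pow ⟨_, rfl⟩,
    mul_one]

lemma Nat.card_subtype_notMem (B : Finset α) : Nat.card {x // x ∉ B} = #Bᶜ := by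
  rw [Nat.card_eq_fintype_card, Fintype.card_subtype, filter_not, filter_mem_eq_inter,
    univ_inter, compl_eq_univ_sdiff]

lemma Nat.card_subtype_notMem_lt {B : Finset α} (hB : B.Nonempty) :
    Nat.card {x // x ∉ B} < Nat.card α := by
  rw [Nat.card_subtype_notMem, Nat.card_eq_fintype_card]
  exact (card_compl_lt_iff_nonempty B).mpr hB

end Generalities

section Reachability

variable {V A : Type} (s t : A → V)

def Adj (x y : V) : Prop := ∃ a, s a = x ∧ t a = y

def Reach : V → V → Prop := Relation.ReflTransGen (Adj s t)

variable {s t}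

lemma reach_arc (a : A) : Reach s t (s a) (t a) :=
  .single ⟨a, rfl, rfl⟩

lemma Reach.le {β : Type*} [Preorder β] {f : V → β} (hf : ∀ a, f (s a) ≤ f (t a)) {u v : V}
    (h : Reach s t u v) : f u ≤ f v := by
  induction h with
  | refl => exact le_rfl
  | tail _ hvw ih => obtain ⟨a, rfl, rfl⟩ := hvw; exact ih.trans (hf a)

lemma exists_walk_of_reach {a : A} {z : V} (h : Reach s t z (s a)) :
    ∃ (m : ℕ) (w : ℕ → A),
      s (w 0) = z ∧ w m = a ∧ ∀ j < m, t (w j) = s (w (j + 1)) := by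
  induction h using Relation.ReflTransGen.head_induction_on with
  | refl => exact ⟨0, fun _ => a, rfl, rfl, by simp⟩
  | head hzz' _ ih =>
    obtain ⟨b, rfl, hb⟩ := hzz'
    obtain ⟨m, w, hw0, hwm, hw⟩ := ih
    refine ⟨m + 1, fun j => j.casesOn b w, rfl, hwm, fun j hj => ?_⟩
    cases j with
    | zero => exact hb.trans hw0.symm
    | succ j => exact hw j (by omega)

lemma isCyclicArc_of_reach {a : A} (h : Reach s t (t a) (s a)) : IsCyclicArc s t a := by
  obtain ⟨m, w, hw0, hwm, hw⟩ := exists_walk_of_reach h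
  -- `ZMod (m + 1)` is `Fin (m + 1)`, so the closed walk is `w` read modulo `m + 1`
  refine ⟨m + 1, m.succ_pos, fun i : Fin (m + 1) => w i, fun (i : Fin (m + 1)) => ?_,
    Fin.last m, hwm⟩
  show t (w i) = s (w ((i + 1 : Fin (m + 1)) : ℕ))
  rw [Fin.val_add_one]
  split_ifs with hi
  · rw [hi, Fin.val_last, hwm, hw0]
  · exact hw i (lt_of_le_of_ne (Nat.lt_succ_iff.mp i.2) (by simpa [Fin.ext_iff] using hi))

lemma reach_of_isCyclicArc {a : A} (h : IsCyclicArc s t a) : Reach s t (t a) (s a) := by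
  obtain ⟨n, hn, c, hc, i, rfl⟩ := h
  have : NeZero n := ⟨hn.ne'⟩
  rw [hc i]
  exact ZMod.reflTransGen_of_succ (v := fun i => s (c i)) (fun j => ⟨c j, rfl, hc j⟩) _ _

lemma hasDicycle_iff_exists_isCyclicArc : HasDicycle s t ↔ ∃ a, IsCyclicArc s t a :=
  ⟨fun ⟨n, hn, c, hc⟩ => ⟨c 0, n, hn, c, hc, 0, rfl⟩,
    fun ⟨_, n, hn, c, hc, _⟩ => ⟨n, hn, c, hc⟩⟩

lemma not_transGen_self_of_not_hasDicycle (h : ¬ HasDicycle s t) (v : V) :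
    ¬ Relation.TransGen (Adj s t) v v := by
  rw [Relation.TransGen.head'_iff]
  rintro ⟨_, ⟨a, rfl, rfl⟩, hback⟩
  exact h (hasDicycle_iff_exists_isCyclicArc.mpr ⟨a, isCyclicArc_of_reach hback⟩)

lemma exists_source_of_not_hasDicycle [Finite V] [Nonempty V] (h : ¬ HasDicycle s t) :
    ∃ v, ∀ a, t a ≠ v := by
  obtain ⟨v, hv⟩ :=
    Finite.exists_forall_not_rel_of_acyclic (not_transGen_self_of_not_hasDicycle h)
  exact ⟨v, fun a hav => hv (s a) ⟨a, rfl, hav⟩⟩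

lemma exists_sink_of_not_hasDicycle [Finite V] [Nonempty V] (h : ¬ HasDicycle s t) :
    ∃ v, ∀ a, s a ≠ v := by
  obtain ⟨v, hv⟩ := Finite.exists_forall_not_rel_of_acyclic (R := swap (Adj s t))
    fun v hv => not_transGen_self_of_not_hasDicycle h v (Relation.transGen_swap.mp hv)
  exact ⟨v, fun a hav => hv (t a) ⟨a, hav, rfl⟩⟩

end Reachability

section Colorings

variable {V A : Type} (s t : A → V) (r : Ordering → Prop)

/-- `r` says which comparisons of the colours at the source and target of an arc are allowed:
strict colourings are `r = (· = .lt)`, weak ones `r = (· ≠ .gt)`. -/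
def IsColoring {β : Type*} [LinearOrder β] (f : V → β) : Prop :=
  ∀ a, r (cmp (f (s a)) (f (t a)))

noncomputable def surjCount (k : ℕ) : ℕ :=
  Nat.card {f : V → Fin k // IsColoring s t r f ∧ Surjective f}

noncomputable def altSurjCount : ℤ :=
  ∑ k ∈ range (Nat.card V + 1), (-1) ^ k * surjCount s t r k

variable {s t r}

lemma isColoring_comp_iff {β γ : Type*} [LinearOrder β] [LinearOrder γ] {m : β → γ}
    (hm : StrictMono m) {g : V → β} : IsColoring s t r (m ∘ g) ↔ IsColoring s t r g := by
  simp only [IsColoring, comp_apply, hm.cmp_map_eq]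

lemma surjCount_eq_zero_of_card_lt [Finite V] {k : ℕ} (hk : Nat.card V < k) :
    surjCount s t r k = 0 := by
  refine Nat.card_eq_zero.mpr (.inl ⟨fun ⟨f, _, hf⟩ => ?_⟩)
  have := Nat.card_le_card_of_surjective f hf
  rw [Nat.card_fin] at this
  omega

variable [Fintype V]

noncomputable def imageFiberEquiv {β : Type*} [LinearOrder β] (I : Finset β) :
    {f : V → β // IsColoring s t r f ∧ univ.image f = I} ≃
      {g : V → Fin #I // IsColoring s t r g ∧ Surjective g} :=
  let e := I.orderIsoOfFin rfl
  have mem {f : V → β} (hf : univ.image f = I) (v : V) : f v ∈ I :=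
    hf ▸ mem_image_of_mem f (mem_univ v)
  have he : StrictMono fun i => (e i : β) := Subtype.strictMono_coe _ |>.comp e.strictMono
  { toFun f := ⟨fun v => e.symm ⟨f.1 v, mem f.2.2 v⟩,
      (isColoring_comp_iff he).mp (by simpa [comp_def] using f.2.1), fun i => by
        have hi : (e i : β) ∈ univ.image f.1 := f.2.2.symm ▸ (e i).2
        obtain ⟨v, -, hv⟩ := mem_image.mp hi
        exact ⟨v, e.symm_apply_eq.mpr (Subtype.ext hv)⟩⟩
    invFun g := ⟨fun v => e (g.1 v), (isColoring_comp_iff he).mpr g.2.1, by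
      ext x
      simp only [mem_image, mem_univ, true_and]
      refine ⟨fun ⟨v, hv⟩ => hv ▸ (e (g.1 v)).2, fun hx => ?_⟩
      obtain ⟨v, hv⟩ := g.2.2 (e.symm ⟨x, hx⟩)
      exact ⟨v, by simp [hv]⟩⟩
    left_inv f := by ext v; simp
    right_inv g := by ext v; simp }

lemma card_isColoring_eq_sum (q : ℕ) :
    Nat.card {f : V → Fin q // IsColoring s t r f} =
      ∑ k ∈ range (Nat.card V + 1), surjCount s t r k * q.choose k := by
  have hsurj : ∀ k ≥ Nat.card V + 1, surjCount s t r k * q.choose k = 0 := fun k hk => by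
    rw [surjCount_eq_zero_of_card_lt (by omega), zero_mul]
  have hchoose : ∀ k ≥ q + 1, surjCount s t r k * q.choose k = 0 := fun k hk => by
    rw [Nat.choose_eq_zero_of_lt (by omega), mul_zero]
  calc Nat.card {f : V → Fin q // IsColoring s t r f}
      = ∑ I : Finset (Fin q), surjCount s t r #I := by
        rw [Nat.card_subtype_eq_sum_card_fiber _ fun f => univ.image f]
        exact sum_congr rfl fun I _ => Nat.card_congr (imageFiberEquiv I)
    _ = ∑ k ∈ range (q + 1), surjCount s t r k * q.choose k := by
        rw [← powerset_univ, sum_powerset_apply_card, card_univ, Fintype.card_fin]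
        simp only [smul_eq_mul, mul_comm]
    _ = ∑ k ∈ range (Nat.card V + 1), surjCount s t r k * q.choose k := by
        rw [← eventually_constant_sum hchoose (n := q + Nat.card V + 1) (by omega),
          eventually_constant_sum hsurj (by omega)]

theorem eval_neg_one_eq_altSurjCount {χ : ℚ[X]}
    (hχ : ∀ q : ℕ, 0 < q →
      χ.eval (q : ℚ) = Nat.card {f : V → Fin q // IsColoring s t r f}) :
    χ.eval (-1) = altSurjCount s t r := by
  set Q : ℚ[X] := ∑ k ∈ range (Nat.card V + 1),
    C ((surjCount s t r k : ℚ) / k !) * descPochhammer ℚ k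
  have hQ (x : ℚ) : Q.eval x = ∑ k ∈ range (Nat.card V + 1),
      (surjCount s t r k : ℚ) / k ! * (descPochhammer ℚ k).eval x := by
    simp [Q, eval_finsetSum]
  have hχQ : χ = Q := Polynomial.eq_of_eval_natCast_eq fun q hq => by
    rw [hχ q hq, card_isColoring_eq_sum, hQ]
    push_cast
    refine sum_congr rfl fun k _ => ?_
    rw [descPochhammer_eval_eq_descFactorial, Nat.descFactorial_eq_factorial_mul_choose]
    push_cast
    field_simp
  rw [hχQ, hQ, altSurjCount]
  push_cast
  refine sum_congr rfl fun k _ => ?_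
  rw [descPochhammer_eval_neg_one]
  field_simp

end Colorings

section Deletion

variable {V A : Type} (s t : A → V) (r : Ordering → Prop)

/-- `delSrc s t B` and `delTgt s t B` are the source and target maps of `D - B`, the subdigraph
induced on the vertices outside `B`. -/
def delSrc (B : Finset V) (a : {a // s a ∉ B ∧ t a ∉ B}) : {v // v ∉ B} := ⟨s a, a.2.1⟩

def delTgt (B : Finset V) (a : {a // s a ∉ B ∧ t a ∉ B}) : {v // v ∉ B} := ⟨t a, a.2.2⟩

def IsLeastColorClass (B : Finset V) : Prop := ∀ a, t a ∈ B → s a ∈ B ∧ r .eq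

variable {s t r}

lemma not_hasDicycle_del {B : Finset V} (h : ¬ HasDicycle s t) :
    ¬ HasDicycle (delSrc s t B) (delTgt s t B) :=
  fun ⟨n, hn, c, hc⟩ => h ⟨n, hn, fun i => (c i).1, fun i => congrArg Subtype.val (hc i)⟩

lemma isLeastColorClass_zeroSet [Fintype V] (hgt : ¬ r .gt) {k : ℕ} {f : V → Fin (k + 1)}
    (hf : IsColoring s t r f) : IsLeastColorClass s t r {v | f v = 0} := by
  intro a hta
  rw [mem_filter] at hta ⊢
  have hfa := hf a
  rw [hta.2] at hfa
  by_cases hsa : f (s a) = 0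
  · exact ⟨⟨mem_univ _, hsa⟩, by simpa [hsa] using hfa⟩
  · exact absurd ((cmp_eq_gt_iff _ _).mpr (Fin.pos_iff_ne_zero.mpr hsa) ▸ hfa) hgt

noncomputable def liftColoring {k : ℕ} (B : Finset V) (g : {v // v ∉ B} → Fin k) :
    V → Fin (k + 1) :=
  fun v => if h : v ∈ B then 0 else (g ⟨v, h⟩).succ

lemma liftColoring_eq_zero_iff {k : ℕ} {B : Finset V} {g : {v // v ∉ B} → Fin k} {v : V} :
    liftColoring B g v = 0 ↔ v ∈ B := by
  unfold liftColoring; split_ifs with h <;> simp [h, Fin.succ_ne_zero]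

lemma isColoring_liftColoring (hlt : r .lt) {k : ℕ} {B : Finset V}
    (hB : IsLeastColorClass s t r B) {g : {v // v ∉ B} → Fin k}
    (hg : IsColoring (delSrc s t B) (delTgt s t B) r g) :
    IsColoring s t r (liftColoring B g) := by
  intro a
  by_cases hta : t a ∈ B
  · simpa [liftColoring, (hB a hta).1, hta] using (hB a hta).2
  by_cases hsa : s a ∈ B
  · simpa [liftColoring, hsa, hta, (cmp_eq_lt_iff _ _).mpr (Fin.succ_pos _)] using hlt
  · simpa [liftColoring, hsa, hta, Fin.strictMono_succ.cmp_map_eq, delSrc, delTgt]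
      using hg ⟨a, hsa, hta⟩

lemma surjective_liftColoring {k : ℕ} {B : Finset V} (hB : B.Nonempty)
    {g : {v // v ∉ B} → Fin k} (hg : Surjective g) : Surjective (liftColoring B g) := by
  intro i
  cases i using Fin.cases with
  | zero => obtain ⟨v, hv⟩ := hB; exact ⟨v, by simp [liftColoring, hv]⟩
  | succ i => obtain ⟨v, rfl⟩ := hg i; exact ⟨v, by simp [liftColoring, v.2]⟩

variable [Fintype V]

noncomputable def zeroFiberEquiv (hlt : r .lt) {k : ℕ} {B : Finset V} (hB : B.Nonempty)
    (hBl : IsLeastColorClass s t r B) :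
    {g : {v // v ∉ B} → Fin k //
        IsColoring (delSrc s t B) (delTgt s t B) r g ∧ Surjective g} ≃
      {f : V → Fin (k + 1) //
        (IsColoring s t r f ∧ Surjective f) ∧ ({v | f v = 0} : Finset V) = B} :=
  have mem_iff {f : V → Fin (k + 1)} (hf : ({v | f v = 0} : Finset V) = B) (v : V) :
      v ∈ B ↔ f v = 0 := by
    rw [← hf]; simp
  { toFun g := ⟨liftColoring B g.1,
      ⟨isColoring_liftColoring hlt hBl g.2.1, surjective_liftColoring hB g.2.2⟩,
      by ext v; simp only [mem_filter, mem_univ, true_and, liftColoring_eq_zero_iff]⟩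
    invFun f := ⟨fun v => (f.1 v).pred (mt (mem_iff f.2.2 v).mpr v.2),
      fun a => by
        dsimp only
        rw [← Fin.strictMono_succ.cmp_map_eq, Fin.succ_pred, Fin.succ_pred]
        exact f.2.1.1 a.1,
      fun i => by
        obtain ⟨v, hv⟩ := f.2.1.2 i.succ
        refine ⟨⟨v, fun hvB => Fin.succ_ne_zero i ?_⟩, by simp [hv]⟩
        exact hv ▸ (mem_iff f.2.2 v).mp hvB⟩
    left_inv g := by ext v; simp [liftColoring, v.2]
    right_inv f := by
      refine Subtype.ext (funext fun v => ?_)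
      by_cases hv : v ∈ B
      · simpa [liftColoring, hv] using ((mem_iff f.2.2 v).mp hv).symm
      · simp [liftColoring, hv] }

theorem surjCount_succ (hlt : r .lt) (hgt : ¬ r .gt) (k : ℕ) :
    surjCount s t r (k + 1) = ∑ B with B.Nonempty ∧ IsLeastColorClass s t r B,
      surjCount (delSrc s t B) (delTgt s t B) r k := by
  rw [surjCount, Nat.card_subtype_eq_sum_card_fiber _ fun f => ({v | f v = 0} : Finset V),
    sum_filter]
  refine sum_congr rfl fun B _ => ?_
  split_ifs with hB
  · exact (Nat.card_congr (zeroFiberEquiv hlt hB.1 hB.2)).symm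
  · refine Nat.card_eq_zero.mpr (.inl ⟨fun ⟨f, ⟨hf, hsurj⟩, hfB⟩ => hB ?_⟩)
    subst hfB
    obtain ⟨v, hv⟩ := hsurj 0
    exact ⟨⟨v, by simpa using hv⟩, isLeastColorClass_zeroSet hgt hf⟩

lemma altSurjCount_eq_sum_range {N : ℕ} (hN : Nat.card V + 1 ≤ N) :
    altSurjCount s t r = ∑ k ∈ range N, (-1) ^ k * (surjCount s t r k : ℤ) :=
  (eventually_constant_sum (u := fun k => (-1) ^ k * (surjCount s t r k : ℤ))
    (fun k hk => by simp [surjCount_eq_zero_of_card_lt (show Nat.card V < k by omega)]) hN).symm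

lemma altSurjCount_of_isEmpty [IsEmpty V] : altSurjCount s t r = 1 := by
  have : Unique {f : V → Fin 0 // IsColoring s t r f ∧ Surjective f} :=
    { default := ⟨isEmptyElim, fun a => isEmptyElim (s a), fun i => i.elim0⟩
      uniq := fun f => Subtype.ext (funext isEmptyElim) }
  simp [altSurjCount, surjCount]

theorem altSurjCount_eq_neg_sum [Nonempty V] (hlt : r .lt) (hgt : ¬ r .gt) :
    altSurjCount s t r = -∑ B with B.Nonempty ∧ IsLeastColorClass s t r B,
      altSurjCount (delSrc s t B) (delTgt s t B) r := by
  have hzero : surjCount s t r 0 = 0 :=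
    Nat.card_eq_zero.mpr (.inl ⟨fun f => (f.1 (Classical.arbitrary V)).elim0⟩)
  rw [altSurjCount, sum_range_succ', hzero]
  simp only [surjCount_succ hlt hgt, Nat.cast_sum, mul_sum, pow_succ, mul_neg_one, neg_mul,
    sum_neg_distrib, Nat.cast_zero, mul_zero, add_zero]
  rw [sum_comm]
  exact congrArg _ (sum_congr rfl fun B hB =>
    (altSurjCount_eq_sum_range (Nat.card_subtype_notMem_lt (mem_filter.mp hB).2.1)).symm)

end Deletion

section AcyclicEvaluation

variable {r : Ordering → Prop}

theorem altSurjCount_of_not_hasDicycle (hlt : r .lt) (hgt : ¬ r .gt) {V A : Type} [Fintype V]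
    {s t : A → V} (hr : ¬ r .eq ∨ IsEmpty A) (h : ¬ HasDicycle s t) :
    altSurjCount s t r = (-1) ^ Nat.card V := by
  induction hn : Nat.card V using Nat.strong_induction_on generalizing V A with
  | _ n ih =>
  subst hn
  rcases isEmpty_or_nonempty V with hV | hV
  · simp [altSurjCount_of_isEmpty]
  set S : Finset V := {v | ∀ a, t a ≠ v}
  have hS : S.Nonempty := by simpa [S, Finset.Nonempty] using exists_source_of_not_hasDicycle h
  have hleast (B : Finset V) : IsLeastColorClass s t r B ↔ B ⊆ S := by
    refine ⟨fun hB v hv => mem_filter.mpr ⟨mem_univ v, fun a hav => ?_⟩,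
      fun hB a hta => absurd rfl ((mem_filter.mp (hB hta)).2 a)⟩
    rcases hr with hr | hA
    · exact hr (hB a (hav ▸ hv)).2
    · exact hA.elim a
  have hdel (B : Finset V) (hB : B.Nonempty) :
      altSurjCount (delSrc s t B) (delTgt s t B) r = (-1) ^ Nat.card V * (-1) ^ #B := by
    have hr' : ¬ r .eq ∨ IsEmpty {a // s a ∉ B ∧ t a ∉ B} :=
      hr.imp id fun _ => Subtype.isEmpty_of_false fun a _ => ‹IsEmpty A›.elim a
    rw [ih _ (Nat.card_subtype_notMem_lt hB) hr' (not_hasDicycle_del h) rfl,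
      Nat.card_subtype_notMem,
      neg_one_pow_card_compl, Nat.card_eq_fintype_card]
  rw [altSurjCount_eq_neg_sum hlt hgt]
  calc -∑ B with B.Nonempty ∧ IsLeastColorClass s t r B,
        altSurjCount (delSrc s t B) (delTgt s t B) r
      = -∑ B with B.Nonempty ∧ B ⊆ S, (-1) ^ Nat.card V * (-1) ^ #B :=
        congrArg _ (sum_congr (by simp [hleast]) fun B hB => hdel B (mem_filter.mp hB).2.1)
    _ = (-1) ^ Nat.card V := by
        rw [← mul_sum, sum_nonempty_subset_neg_one_pow_card hS]; ring

theorem altSurjCount_eq_zero_of_not_hasDicycle (heq : r .eq) (hlt : r .lt) (hgt : ¬ r .gt)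
    {V A : Type} [Fintype V] [Nonempty A] {s t : A → V} (h : ¬ HasDicycle s t) :
    altSurjCount s t r = 0 := by
  induction hn : Nat.card V using Nat.strong_induction_on generalizing V A with
  | _ n ih =>
  subst hn
  have : Nonempty V := ⟨s (Classical.arbitrary A)⟩
  set K : Finset V := {v | ∃ a, s a = v}
  have hK : Kᶜ.Nonempty := by
    obtain ⟨v, hv⟩ := exists_sink_of_not_hasDicycle h
    exact ⟨v, by simpa [K] using hv⟩
  have hdel (B : Finset V) (hB : B.Nonempty ∧ IsLeastColorClass s t r B) :
      altSurjCount (delSrc s t B) (delTgt s t B) r = if K ⊆ B then (-1) ^ #Bᶜ else 0 := by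
    split_ifs with hKB
    · have : IsEmpty {a // s a ∉ B ∧ t a ∉ B} :=
        Subtype.isEmpty_of_false fun a ha => ha.1 (hKB (by simp [K]))
      rw [altSurjCount_of_not_hasDicycle hlt hgt (.inr this) (not_hasDicycle_del h),
        Nat.card_subtype_notMem]
    · obtain ⟨_, hv, hvB⟩ := not_subset.mp hKB
      obtain ⟨a, rfl⟩ := (mem_filter.mp hv).2
      have : Nonempty {a // s a ∉ B ∧ t a ∉ B} :=
        ⟨⟨a, hvB, fun hta => hvB (hB.2 a hta).1⟩⟩
      exact ih _ (Nat.card_subtype_notMem_lt hB.1) (not_hasDicycle_del h) rfl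
  have hsupset (B : Finset V) :
      (B.Nonempty ∧ IsLeastColorClass s t r B) ∧ K ⊆ B ↔ K ⊆ B := by
    refine ⟨And.right, fun hKB => ⟨⟨?_, fun a _ => ⟨hKB (by simp [K]), heq⟩⟩, hKB⟩⟩
    obtain ⟨a⟩ := ‹Nonempty A›
    exact ⟨s a, hKB (by simp [K])⟩
  rw [altSurjCount_eq_neg_sum hlt hgt, sum_congr rfl fun B hB => hdel B (mem_filter.mp hB).2,
    ← sum_filter, filter_filter, filter_congr fun B _ => hsupset B,
    sum_superset_neg_one_pow_card_compl hK, neg_zero]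

end AcyclicEvaluation

section WeakColorings

variable {V A : Type} {s t : A → V} {β : Type*}

lemma isColoring_eq_lt_iff [LinearOrder β] {f : V → β} :
    IsColoring s t (· = .lt) f ↔ ∀ a, f (s a) < f (t a) :=
  forall_congr' fun _ => cmp_eq_lt_iff _ _

lemma isColoring_ne_gt_iff [LinearOrder β] {f : V → β} :
    IsColoring s t (· ≠ .gt) f ↔ ∀ a, f (s a) ≤ f (t a) :=
  forall_congr' fun _ => (cmp_eq_gt_iff _ _).not.trans not_lt

lemma isEmpty_strictColoring_of_hasDicycle [Preorder β] (h : HasDicycle s t) :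
    IsEmpty {f : V → β // ∀ a, f (s a) < f (t a)} := by
  obtain ⟨a, ha⟩ := hasDicycle_iff_exists_isCyclicArc.mp h
  exact ⟨fun ⟨f, hf⟩ =>
    ((hf a).trans_le ((reach_of_isCyclicArc ha).le fun b => (hf b).le)).false⟩

variable [PartialOrder β]

lemma eq_of_isCyclicArc {f : V → β} (hf : ∀ a, f (s a) ≤ f (t a)) {a : A}
    (ha : IsCyclicArc s t a) : f (s a) = f (t a) :=
  le_antisymm (hf a) ((reach_of_isCyclicArc ha).le hf)

def weakColoringEquivOfTotallyCyclic (h : ∀ a, IsCyclicArc s t a) :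
    {f : V → β // ∀ a, f (s a) ≤ f (t a)} ≃ (Quotient (connSetoid s t) → β) where
  toFun f := Quotient.lift f.1 fun u v (huv : Relation.ReflTransGen _ u v) => by
    induction huv with
    | refl => rfl
    | tail _ hvw ih =>
      obtain ⟨a, ⟨rfl, rfl⟩ | ⟨rfl, rfl⟩⟩ := hvw
      · exact ih.trans (eq_of_isCyclicArc f.2 (h a))
      · exact ih.trans (eq_of_isCyclicArc f.2 (h a)).symm
  invFun F := ⟨fun v => F ⟦v⟧, fun a =>
    (congrArg F (Quotient.sound (.single ⟨a, .inl ⟨rfl, rfl⟩⟩))).le⟩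
  left_inv _ := rfl
  right_inv F := funext fun x => Quotient.inductionOn x fun _ => rfl

end WeakColorings

section Condensation

variable {V A : Type} (s t : A → V)

def sccSetoid : Setoid V where
  r u v := Reach s t u v ∧ Reach s t v u
  iseqv := ⟨fun _ => ⟨.refl, .refl⟩, fun h => ⟨h.2, h.1⟩,
    fun h h' => ⟨h.1.trans h'.1, h'.2.trans h.2⟩⟩

/-- The condensation keeps only the arcs joining distinct strong components, so it has no loops. -/
abbrev CondArc : Type := {a : A // ¬ (sccSetoid s t).r (s a) (t a)}

def condSrc (a : CondArc s t) : Quotient (sccSetoid s t) := ⟦s a.1⟧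

def condTgt (a : CondArc s t) : Quotient (sccSetoid s t) := ⟦t a.1⟧

variable {s t}

lemma not_hasDicycle_condensation : ¬ HasDicycle (condSrc s t) (condTgt s t) := by
  rintro ⟨n, hn, c, hc⟩
  have : NeZero n := ⟨hn.ne'⟩
  have step (i : ZMod n) : Reach s t (s (c i).1) (s (c (i + 1)).1) :=
    (reach_arc _).trans (Quotient.exact (hc i)).1
  have back : Reach s t (s (c 1).1) (s (c 0).1) := by
    have := ZMod.reflTransGen_of_succ (v := fun i => s (c i).1) step 1 0
    unfold Reach at this
    rwa [Relation.reflTransGen_eq_self] at this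
  have forth : Reach s t (t (c 0).1) (s (c 1).1) := by
    simpa using (Quotient.exact (hc 0)).1
  exact (c 0).2 ⟨reach_arc _, forth.trans back⟩

lemma nonempty_condArc {a : A} (ha : ¬ IsCyclicArc s t a) : Nonempty (CondArc s t) :=
  ⟨a, fun h => ha (isCyclicArc_of_reach h.2)⟩

def weakColoringCondensationEquiv {β : Type*} [PartialOrder β] :
    {f : V → β // ∀ a, f (s a) ≤ f (t a)} ≃
      {F : Quotient (sccSetoid s t) → β // ∀ a, F (condSrc s t a) ≤ F (condTgt s t a)} where
  toFun f := ⟨Quotient.lift f.1 fun _ _ h => le_antisymm (h.1.le f.2) (h.2.le f.2),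
    fun a => f.2 a.1⟩
  invFun F := ⟨fun v => F.1 ⟦v⟧, fun a => by
    by_cases h : (sccSetoid s t).r (s a) (t a)
    · exact (congrArg F.1 (Quotient.sound h)).le
    · exact F.2 ⟨a, h⟩⟩
  left_inv _ := rfl
  right_inv F := Subtype.ext (funext fun x => Quotient.inductionOn x fun _ => rfl)

end Condensation

theorem chromatic_at_minus_one_general (V A : Type) [Fintype V]
    (s t : A → V)
    (χlt χge : Polynomial ℚ)
    (hχlt : ∀ q : ℕ, 0 < q → χlt.eval (q : ℚ) =
      (Nat.card {f : V → Fin q // ∀ a : A, f (s a) < f (t a)} : ℚ))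
    (hχge : ∀ q : ℕ, 0 < q → χge.eval (q : ℚ) =
      (Nat.card {f : V → Fin q // ∀ a : A, f (s a) ≤ f (t a)} : ℚ)) :
    (¬ HasDicycle s t → χlt.eval (-1) = (-1 : ℚ) ^ (Fintype.card V)) ∧
    (HasDicycle s t → χlt.eval (-1) = 0) ∧
    ((∀ a : A, IsCyclicArc s t a) →
      χge.eval (-1) = (-1 : ℚ) ^ (Nat.card (Quotient (connSetoid s t)))) ∧
    (¬ (∀ a : A, IsCyclicArc s t a) → χge.eval (-1) = 0) := by
  refine ⟨fun hacyc => ?_, fun hcyc => ?_, fun htc => ?_, fun hntc => ?_⟩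
  · simp_rw [← isColoring_eq_lt_iff] at hχlt
    rw [eval_neg_one_eq_altSurjCount hχlt,
      altSurjCount_of_not_hasDicycle (r := (· = .lt)) rfl nofun (.inl nofun) hacyc,
      Nat.card_eq_fintype_card]
    push_cast; rfl
  · have : χlt = 0 := Polynomial.eq_of_eval_natCast_eq fun q hq => by
      have := isEmpty_strictColoring_of_hasDicycle (β := Fin q) hcyc
      simp [hχlt q hq]
    simp [this]
  · have : χge = X ^ Nat.card (Quotient (connSetoid s t)) :=
      Polynomial.eq_of_eval_natCast_eq fun q hq => by
        rw [hχge q hq, Nat.card_congr (weakColoringEquivOfTotallyCyclic htc)]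
        simp
    simp [this]
  · obtain ⟨a, ha⟩ := not_forall.mp hntc
    have := nonempty_condArc ha
    let _ : Fintype (Quotient (sccSetoid s t)) := Fintype.ofFinite _
    have hcond (q : ℕ) (hq : 0 < q) : χge.eval (q : ℚ) =
        Nat.card {F : Quotient (sccSetoid s t) → Fin q //
          IsColoring (condSrc s t) (condTgt s t) (· ≠ .gt) F} := by
      rw [hχge q hq, Nat.card_congr weakColoringCondensationEquiv,
        Nat.card_congr (Equiv.subtypeEquivRight fun _ => isColoring_ne_gt_iff)]
    rw [eval_neg_one_eq_altSurjCount hcond,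
      altSurjCount_eq_zero_of_not_hasDicycle (r := (· ≠ .gt)) nofun nofun (· rfl)
        not_hasDicycle_condensation, Int.cast_zero]

/-- for a digraph `D = (V,A)` with strict-chromatic polynomial `χ^<`
and weak-chromatic polynomial `χ^≥`: `χ^<(−1) = (−1)^{|V|}` if `D` is acyclic and `0`
otherwise, and `χ^≥(−1) = (−1)^{comp(D)}` if `D` is totally cyclic and `0` otherwise. -/
theorem chromatic_at_minus_one (V A : Type) [Fintype V] [Fintype A]
    (s t : A → V)
    (χlt χge : Polynomial ℚ)
    (hχlt : ∀ q : ℕ, 0 < q → χlt.eval (q : ℚ) =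
      (Nat.card {f : V → Fin q // ∀ a : A, f (s a) < f (t a)} : ℚ))
    (hχge : ∀ q : ℕ, 0 < q → χge.eval (q : ℚ) =
      (Nat.card {f : V → Fin q // ∀ a : A, f (s a) ≤ f (t a)} : ℚ)) :
    (¬ HasDicycle s t → χlt.eval (-1) = (-1 : ℚ) ^ (Fintype.card V)) ∧
    (HasDicycle s t → χlt.eval (-1) = 0) ∧
    ((∀ a : A, IsCyclicArc s t a) →
      χge.eval (-1) = (-1 : ℚ) ^ (Nat.card (Quotient (connSetoid s t)))) ∧
    (¬ (∀ a : A, IsCyclicArc s t a) → χge.eval (-1) = 0) :=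
  chromatic_at_minus_one_general V A s t χlt χge hχlt hχge
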